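/- Arbitrary positive announcements are not composable on S5: there exist a pointed epistemic model M_s (with two agents a, b and atoms p, q) and a formula φ = L_a q ∧ K_a(K_b q ∨ K_b ¬q) such that M_s ⊨ ◊⁺◊⁺φ but M_s ⊭ ◊⁺φ; hence ◊⁺◊⁺φ → ◊⁺φ is not valid on S5. -/
import Mathlib


/-- An epistemic (S5) model: a nonempty set of states, an equivalence
relation for each agent, and a valuation of atoms. -/
structure EpiModel (A P : Type) where
  S : Type
  ne : Nonempty S
  rel : A → S → S → Prop
  equiv : ∀ a, Equivalence (rel a)
  val : P → Set S

/-- Positive formulas L_EL⁺ : p | ¬p | ∧ | ∨ | K_a. -/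
inductive PosForm (A P : Type) where
  | atom : P → PosForm A P
  | natom : P → PosForm A P
  | and : PosForm A P → PosForm A P → PosForm A P
  | or : PosForm A P → PosForm A P → PosForm A P
  | know : A → PosForm A P → PosForm A P

/-- Satisfaction of a positive formula, relativized to a current domain `D`
(representing the submodel of `M` induced by `D`). -/
def PosForm.sat {A P : Type} (M : EpiModel A P) : PosForm A P → Set M.S → M.S → Prop
  | .atom p, _, s => s ∈ M.val p
  | .natom p, _, s => s ∉ M.val p
  | .and φ ψ, D, s => PosForm.sat M φ D s ∧ PosForm.sat M ψ D s
  | .or φ ψ, D, s => PosForm.sat M φ D s ∨ PosForm.sat M ψ D s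
  | .know a φ, D, s => ∀ t, M.rel a s t → t ∈ D → PosForm.sat M φ D t

/-- The language L_PAPAL : atoms, ¬, ∧, K_a, announcements [ψ]φ and the
positive arbitrary-announcement quantifier □⁺. -/
inductive Form (A P : Type) where
  | atom : P → Form A P
  | neg : Form A P → Form A P
  | and : Form A P → Form A P → Form A P
  | know : A → Form A P → Form A P
  | ann : Form A P → Form A P → Form A P
  | pbox : Form A P → Form A P

/-- Satisfaction, relativized to a current domain `D`: `Form.sat M φ D s`
means that φ holds at state `s` of the restriction of `M` to `D`.
Announcement `[ψ]φ` further restricts the domain to the states of `D`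
satisfying ψ; `□⁺φ` quantifies over announcements of positive formulas. -/
def Form.sat {A P : Type} (M : EpiModel A P) : Form A P → Set M.S → M.S → Prop
  | .atom p, _, s => s ∈ M.val p
  | .neg φ, D, s => ¬ Form.sat M φ D s
  | .and φ ψ, D, s => Form.sat M φ D s ∧ Form.sat M ψ D s
  | .know a φ, D, s => ∀ t, M.rel a s t → t ∈ D → Form.sat M φ D t
  | .ann ψ φ, D, s => Form.sat M ψ D s → Form.sat M φ {t | t ∈ D ∧ Form.sat M ψ D t} s
  | .pbox φ, D, s => ∀ χ : PosForm A P, PosForm.sat M χ D s →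
      Form.sat M φ {t | t ∈ D ∧ PosForm.sat M χ D t} s

/-- Truth at a pointed model `M_s`. -/
def Sat {A P : Type} (M : EpiModel A P) (s : M.S) (φ : Form A P) : Prop :=
  Form.sat M φ Set.univ s

def Form.or {A P : Type} (φ ψ : Form A P) : Form A P := .neg (.and (.neg φ) (.neg ψ))
def Form.imp {A P : Type} (φ ψ : Form A P) : Form A P := Form.or (.neg φ) ψ
def Form.iff {A P : Type} (φ ψ : Form A P) : Form A P := .and (Form.imp φ ψ) (Form.imp ψ φ)
def Form.pdia {A P : Type} (φ : Form A P) : Form A P := .neg (.pbox (.neg φ))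
def Form.lknow {A P : Type} (a : A) (φ : Form A P) : Form A P := .neg (.know a (.neg φ))

/-- Validity on the class S5 of all epistemic models. -/
def Valid (A P : Type) (φ : Form A P) : Prop :=
  ∀ (M : EpiModel A P) (s : M.S), Sat M s φ

namespace PANC

/-- Five states: actual state `s0` (¬p¬q), its duplicate `x` (¬p¬q),
`t` (pq), `u` (pq), and `y` (p¬q). -/
inductive St : Type
  | s0 | x | t | u | y
  deriving DecidableEq

/-- b-partition: `{s0, t}` vs `{x, u, y}`. -/
def cls : St → Bool
  | .s0 => true
  | .t => true
  | _ => false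

/-- The counterexample model: agent `b` has classes `{s0,t}`, `{x,u,y}`;
every other agent has the total relation; `p` holds at `{t,u,y}`,
`q` holds at `{t,u}`. -/
def Mdl (A P : Type) (b : A) (p q : P) : EpiModel A P where
  S := St
  ne := ⟨.s0⟩
  rel c v w := c = b → cls v = cls w
  equiv _ := ⟨fun _ _ => rfl, fun h hb => (h hb).symm, fun h1 h2 hb => (h1 hb).trans (h2 hb)⟩
  val r := {v | (r = p ∧ (v = .t ∨ v = .u ∨ v = .y)) ∨ (r = q ∧ (v = .t ∨ v = .u))}

variable {A P : Type} (a b : A) (p q : P)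

theorem forall_st (Q : St → Prop) :
    (∀ v : St, Q v) ↔ (Q .s0 ∧ Q .x ∧ Q .t ∧ Q .u ∧ Q .y) := by
  constructor
  · intro h; exact ⟨h _, h _, h _, h _, h _⟩
  · rintro ⟨h1, h2, h3, h4, h5⟩ v; cases v <;> assumption

theorem mem_val (r : P) (v : St) :
    v ∈ (Mdl A P b p q).val r ↔
      ((r = p ∧ (v = .t ∨ v = .u ∨ v = .y)) ∨ (r = q ∧ (v = .t ∨ v = .u))) :=
  Iff.rfl

theorem rel_iff (c : A) (v w : St) :
    (Mdl A P b p q).rel c v w ↔ (c = b → cls v = cls w) :=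
  Iff.rfl

/-- Key preservation lemma: any positive formula true at `u` is true at `t`,
and any positive formula true at `x` is true at `s0` (evaluated on the full
model). -/
theorem key (χ : PosForm A P) :
    (PosForm.sat (Mdl A P b p q) χ Set.univ .u → PosForm.sat (Mdl A P b p q) χ Set.univ .t) ∧
    (PosForm.sat (Mdl A P b p q) χ Set.univ .x → PosForm.sat (Mdl A P b p q) χ Set.univ .s0) := by
  induction χ with
  | atom r =>
      simp only [PosForm.sat, mem_val]
      constructor
      · rintro (⟨h, _⟩ | ⟨h, _⟩)
        · exact Or.inl ⟨h, Or.inl rfl⟩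
        · exact Or.inr ⟨h, Or.inl rfl⟩
      · rintro (⟨_, h⟩ | ⟨_, h⟩) <;> simp at h
  | natom r =>
      simp only [PosForm.sat, mem_val]
      constructor
      · intro h hc
        apply h
        rcases hc with ⟨h1, _⟩ | ⟨h1, _⟩
        · exact Or.inl ⟨h1, Or.inr (Or.inl rfl)⟩
        · exact Or.inr ⟨h1, Or.inr rfl⟩
      · intro _ hc
        rcases hc with ⟨_, h1⟩ | ⟨_, h1⟩ <;> simp at h1
  | and φ ψ ihφ ihψ =>
      exact ⟨fun h => ⟨ihφ.1 h.1, ihψ.1 h.2⟩, fun h => ⟨ihφ.2 h.1, ihψ.2 h.2⟩⟩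
  | or φ ψ ihφ ihψ =>
      constructor
      · rintro (h | h)
        · exact Or.inl (ihφ.1 h)
        · exact Or.inr (ihψ.1 h)
      · rintro (h | h)
        · exact Or.inl (ihφ.2 h)
        · exact Or.inr (ihψ.2 h)
  | know c φ ih =>
      by_cases hc : c = b
      · subst hc
        constructor
        · intro h w hw _
          -- b-successors of t are s0 and t
          have hw' : cls St.t = cls w := hw rfl
          have hx : PosForm.sat (Mdl A P c p q) φ Set.univ .x :=
            h .x (fun _ => rfl) trivial
          have hu : PosForm.sat (Mdl A P c p q) φ Set.univ .u :=
            h .u (fun _ => rfl) trivial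
          cases w <;> simp [cls] at hw' ⊢
          · exact ih.2 hx
          · exact ih.1 hu
        · intro h w hw _
          have hw' : cls St.s0 = cls w := hw rfl
          have hx : PosForm.sat (Mdl A P c p q) φ Set.univ .x :=
            h .x (fun _ => rfl) trivial
          have hu : PosForm.sat (Mdl A P c p q) φ Set.univ .u :=
            h .u (fun _ => rfl) trivial
          cases w <;> simp [cls] at hw' ⊢
          · exact ih.2 hx
          · exact ih.1 hu
      · constructor <;>
        · intro h w _ _
          exact h w (fun hb => absurd hb hc) trivial


theorem psat_congr {A P : Type} (M : EpiModel A P) (χ : PosForm A P) (D D' : Set M.S)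
    (h : ∀ v, v ∈ D ↔ v ∈ D') (s : M.S) :
    PosForm.sat M χ D s ↔ PosForm.sat M χ D' s := by
  rw [Set.ext h]

theorem fsat_congr {A P : Type} (M : EpiModel A P) (ψ : Form A P) (D D' : Set M.S)
    (h : ∀ v, v ∈ D ↔ v ∈ D') (s : M.S) :
    Form.sat M ψ D s ↔ Form.sat M ψ D' s := by
  rw [Set.ext h]

end PANC

/-- Arbitrary positive announcements are not composable on
S5: for distinct agents `a`, `b` and distinct atoms `p`, `q`, there is a
pointed epistemic model `M_s` such that, for
`φ = L_a q ∧ K_a (K_b q ∨ K_b ¬q)`, we have `M_s ⊨ ◊⁺◊⁺φ` but `M_s ⊭ ◊⁺φ`;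
hence `◊⁺◊⁺φ → ◊⁺φ` is not valid on S5. -/
theorem positive_announcements_not_composable
    (A P : Type) (a b : A) (hab : a ≠ b) (p q : P) (hpq : p ≠ q) :
    (∃ (M : EpiModel A P) (s : M.S),
      Sat M s (Form.pdia (Form.pdia
        (Form.and (Form.lknow a (.atom q))
          (.know a (Form.or (.know b (.atom q)) (.know b (.neg (.atom q)))))))) ∧
      ¬ Sat M s (Form.pdia
        (Form.and (Form.lknow a (.atom q))
          (.know a (Form.or (.know b (.atom q)) (.know b (.neg (.atom q)))))))) ∧
    ¬ Valid A P (Form.imp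
        (Form.pdia (Form.pdia
          (Form.and (Form.lknow a (.atom q))
            (.know a (Form.or (.know b (.atom q)) (.know b (.neg (.atom q))))))))
        (Form.pdia
          (Form.and (Form.lknow a (.atom q))
            (.know a (Form.or (.know b (.atom q)) (.know b (.neg (.atom q)))))))) := by
  classical
  open PANC in
  set M : EpiModel A P := PANC.Mdl A P b p q with hMdef
  have hqp : q ≠ p := Ne.symm hpq
  have hrel_a : ∀ v w : St, M.rel a v w := fun _ _ h => absurd h hab
  have hvq : ∀ v : St, v ∈ M.val q ↔ (v = .t ∨ v = .u) := by
    intro v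
    show ((q = p ∧ (v = .t ∨ v = .u ∨ v = .y)) ∨ (q = q ∧ (v = .t ∨ v = .u))) ↔ _
    constructor
    · rintro (⟨h, _⟩ | ⟨_, h⟩)
      · exact absurd h hqp
      · exact h
    · exact fun h => Or.inr ⟨rfl, h⟩
  have hvp : ∀ v : St, v ∈ M.val p ↔ (v = .t ∨ v = .u ∨ v = .y) := by
    intro v
    show ((p = p ∧ (v = .t ∨ v = .u ∨ v = .y)) ∨ (p = q ∧ (v = .t ∨ v = .u))) ↔ _
    constructor
    · rintro (⟨_, h⟩ | ⟨h, _⟩)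
      · exact h
      · exact absurd h hpq
    · exact fun h => Or.inl ⟨rfl, h⟩
  -- truth set of the first announcement χ1 = q ∨ K_b (q ∨ ¬p) on the full model
  have hχ1sat : ∀ v : St,
      PosForm.sat M (PosForm.or (.atom q) (.know b (.or (.atom q) (.natom p)))) Set.univ v
        ↔ (v = St.s0 ∨ v = St.t ∨ v = St.u) := by
    intro v
    constructor
    · rintro (h | h)
      · rcases (hvq v).mp h with rfl | rfl
        · exact Or.inr (Or.inl rfl)
        · exact Or.inr (Or.inr rfl)
      · cases v with
        | s0 => exact Or.inl rfl
        | t => exact Or.inr (Or.inl rfl)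
        | u => exact Or.inr (Or.inr rfl)
        | x =>
            exfalso
            rcases h St.y (fun _ => rfl) trivial with h1 | h1
            · rcases (hvq _).mp h1 with h2 | h2 <;> exact St.noConfusion h2
            · exact h1 ((hvp _).mpr (Or.inr (Or.inr rfl)))
        | y =>
            exfalso
            rcases h St.y (fun _ => rfl) trivial with h1 | h1
            · rcases (hvq _).mp h1 with h2 | h2 <;> exact St.noConfusion h2
            · exact h1 ((hvp _).mpr (Or.inr (Or.inr rfl)))
    · rintro (rfl | rfl | rfl)
      · refine Or.inr ?_
        intro w hw _
        have hcls : cls St.s0 = cls w := hw rfl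
        cases w with
        | s0 => exact Or.inr (fun hp => by
            rcases (hvp _).mp hp with h | h | h <;> exact St.noConfusion h)
        | t => exact Or.inl ((hvq _).mpr (Or.inl rfl))
        | x => exact absurd hcls (by decide)
        | u => exact absurd hcls (by decide)
        | y => exact absurd hcls (by decide)
      · exact Or.inl ((hvq _).mpr (Or.inl rfl))
      · exact Or.inl ((hvq _).mpr (Or.inr rfl))
  -- truth set of the second announcement χ2 = ¬q ∨ K_b q on the restriction D1 = {s0,t,u}
  have hχ2sat : ∀ v : St,
      (v ∈ ({w : St | w = St.s0 ∨ w = St.t ∨ w = St.u} : Set St) ∧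
        PosForm.sat M (PosForm.or (.natom q) (.know b (.atom q)))
          ({w : St | w = St.s0 ∨ w = St.t ∨ w = St.u} : Set St) v)
        ↔ (v = St.s0 ∨ v = St.u) := by
    intro v
    constructor
    · rintro ⟨hv1, hv2 | hv2⟩
      · rcases hv1 with rfl | rfl | rfl
        · exact Or.inl rfl
        · exact absurd ((hvq _).mpr (Or.inl rfl)) hv2
        · exact absurd ((hvq _).mpr (Or.inr rfl)) hv2
      · rcases hv1 with rfl | rfl | rfl
        · exact Or.inl rfl
        · exfalso
          rcases (hvq _).mp (hv2 St.s0 (fun _ => rfl) (Or.inl rfl)) with h | h <;>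
            exact St.noConfusion h
        · exact Or.inr rfl
    · rintro (rfl | rfl)
      · exact ⟨Or.inl rfl, Or.inl (fun hq => by
          rcases (hvq _).mp hq with h | h <;> exact St.noConfusion h)⟩
      · refine ⟨Or.inr (Or.inr rfl), Or.inr ?_⟩
        intro w hw hwD
        have hcls : cls St.u = cls w := hw rfl
        rcases hwD with rfl | rfl | rfl
        · exact absurd hcls (by decide)
        · exact absurd hcls (by decide)
        · exact (hvq _).mpr (Or.inr rfl)
  have F1 : PosForm.sat M (PosForm.or (.atom q) (.know b (.or (.atom q) (.natom p))))
      Set.univ St.s0 := (hχ1sat St.s0).mpr (Or.inl rfl)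
  have F2 : PosForm.sat M (PosForm.or (.natom q) (.know b (.atom q)))
      ({w : St | w = St.s0 ∨ w = St.t ∨ w = St.u} : Set St) St.s0 :=
    Or.inl (fun hq => by rcases (hvq _).mp hq with h | h <;> exact St.noConfusion h)
  -- φ holds at s0 in the doubly restricted model with domain D2 = {s0, u}
  have F3 : Form.sat M
      (Form.and (Form.lknow a (.atom q))
        (.know a (Form.or (.know b (.atom q)) (.know b (.neg (.atom q))))))
      ({w : St | w = St.s0 ∨ w = St.u} : Set St) St.s0 := by
    constructor
    · -- L_a q : u is an a-neighbour satisfying q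
      intro h
      exact h St.u (hrel_a _ _) (Or.inr rfl) ((hvq _).mpr (Or.inr rfl))
    · intro w _ hw
      rcases hw with rfl | rfl
      · -- at s0 : K_b ¬q holds
        rintro ⟨_, h2⟩
        apply h2
        intro w' hb hw'
        rcases hw' with rfl | rfl
        · exact fun hq => by
            rcases (hvq _).mp hq with h | h <;> exact St.noConfusion h
        · exact absurd (hb rfl) (by decide)
      · -- at u : K_b q holds
        rintro ⟨h1, _⟩
        apply h1
        intro w' hb hw'
        rcases hw' with rfl | rfl
        · exact absurd (hb rfl) (by decide)
        · exact (hvq _).mpr (Or.inr rfl)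
  -- ◊⁺◊⁺φ holds at s0
  have posA : Sat M St.s0 (Form.pdia (Form.pdia
      (Form.and (Form.lknow a (.atom q))
        (.know a (Form.or (.know b (.atom q)) (.know b (.neg (.atom q)))))))) := by
    intro H
    have h1 := H (PosForm.or (.atom q) (.know b (.or (.atom q) (.natom p)))) F1
    apply h1
    intro H2
    have F2' : PosForm.sat M (PosForm.or (.natom q) (.know b (.atom q)))
        {w | w ∈ (Set.univ : Set M.S) ∧
          PosForm.sat M (PosForm.or (.atom q) (.know b (.or (.atom q) (.natom p))))
            Set.univ w} St.s0 := by
      refine (PANC.psat_congr M _ _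
        ({w : St | w = St.s0 ∨ w = St.t ∨ w = St.u} : Set St) ?_ St.s0).mpr F2
      intro v
      exact ⟨fun h => (hχ1sat v).mp h.2, fun h => ⟨trivial, (hχ1sat v).mpr h⟩⟩
    have h2 := H2 (PosForm.or (.natom q) (.know b (.atom q))) F2'
    apply h2
    refine (PANC.fsat_congr M _ _ ({w : St | w = St.s0 ∨ w = St.u} : Set St) ?_ St.s0).mpr F3
    intro v
    constructor
    · rintro ⟨hv1, hv2⟩
      refine (hχ2sat v).mp ⟨(hχ1sat v).mp hv1.2, ?_⟩
      refine (PANC.psat_congr M _ _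
        ({w : St | w = St.s0 ∨ w = St.t ∨ w = St.u} : Set St) ?_ v).mp hv2
      intro v'
      exact ⟨fun h => (hχ1sat v').mp h.2, fun h => ⟨trivial, (hχ1sat v').mpr h⟩⟩
    · intro hv
      rcases (hχ2sat v).mpr hv with ⟨hv1, hv2⟩
      refine ⟨⟨trivial, (hχ1sat v).mpr hv1⟩, ?_⟩
      refine (PANC.psat_congr M _
        ({w : St | w = St.s0 ∨ w = St.t ∨ w = St.u} : Set St) _ ?_ v).mp hv2
      intro v'
      exact ⟨fun h => ⟨trivial, (hχ1sat v').mpr h⟩, fun h => (hχ1sat v').mp h.2⟩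
  -- ◊⁺φ fails at s0
  have negB : ¬ Sat M St.s0 (Form.pdia
      (Form.and (Form.lknow a (.atom q))
        (.know a (Form.or (.know b (.atom q)) (.know b (.neg (.atom q))))))) := by
    intro h
    apply h
    intro χ hχ hφsat
    by_cases ht : PosForm.sat M χ Set.univ St.t
    · -- t survives the announcement, so at s0 agent b confuses q and ¬q
      have hsmem : St.s0 ∈ {w : St | w ∈ (Set.univ : Set M.S) ∧ PosForm.sat M χ Set.univ w} :=
        ⟨trivial, hχ⟩
      have hor := hφsat.2 St.s0 (hrel_a _ _) hsmem
      apply hor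
      constructor
      · intro hK1
        rcases (hvq _).mp (hK1 St.s0 (fun _ => rfl) hsmem) with h' | h' <;>
          exact St.noConfusion h'
      · intro hK2
        exact hK2 St.t (fun _ => rfl) ⟨trivial, ht⟩ ((hvq _).mpr (Or.inl rfl))
    · -- t removed, hence (key lemma) u removed: no q-state survives
      have hu : ¬ PosForm.sat M χ Set.univ St.u := fun h' => ht ((PANC.key b p q χ).1 h')
      apply hφsat.1
      intro w _ hwE hwq
      rcases (hvq _).mp hwq with rfl | rfl
      · exact ht hwE.2
      · exact hu hwE.2
  refine ⟨⟨M, St.s0, posA, negB⟩, ?_⟩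
  intro hval
  exact hval M St.s0 ⟨not_not_intro posA, negB⟩
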